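/- arXiv:1209.5367 — 3 statements merged into one kernel-verified Lean document; each statement's English description precedes it below -/
import Mathlib

section
/- The space of vectors in H fixed by every translation is one-dimensional: for φ ∈ H, one has τ_z φ = φ for all z ∈ ℤ^n if and only if φ is a scalar multiple of the quiescent basis vector e_{c₀}. -/
open scoped ENNReal

noncomputable section

namespace QCA

abbrev Lat (n : ℕ) : Type := Fin n → ℤ

def Conf (n : ℕ) (A : Type*) (q0 : A) : Type _ :=
  {c : Lat n → A // {x : Lat n | c x ≠ q0}.Finite}

def c0 (n : ℕ) (A : Type*) (q0 : A) : Conf n A q0 :=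
  ⟨fun _ => q0, by simp⟩

abbrev H (n : ℕ) (A : Type*) (q0 : A) : Type _ := lp (fun _ : Conf n A q0 => ℂ) 2

def eVec {n : ℕ} {A : Type*} {q0 : A} (c : Conf n A q0) : H n A q0 :=
  letI : DecidableEq (Conf n A q0) := Classical.decEq _
  lp.single 2 c 1

/-- Translation of a configuration by `z`: the configuration `x ↦ c (x + z)`. -/
def shiftConf {n : ℕ} {A : Type*} {q0 : A} (z : Lat n) (c : Conf n A q0) : Conf n A q0 :=
  ⟨fun x => c.1 (x + z), by
    have h : {x : Lat n | c.1 (x + z) ≠ q0} ⊆ (fun x : Lat n => x + z) ⁻¹' {x | c.1 x ≠ q0} :=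
      fun x hx => hx
    exact (c.2.preimage ((add_left_injective z).injOn)).subset h⟩

/-- Translation by `z` as a permutation of the set of finite configurations. -/
def shiftEquiv {n : ℕ} {A : Type*} (q0 : A) (z : Lat n) : Conf n A q0 ≃ Conf n A q0 where
  toFun := shiftConf z
  invFun := shiftConf (-z)
  left_inv c := Subtype.ext (funext fun x => by
    show c.1 (x + -z + z) = c.1 x
    rw [neg_add_cancel_right])
  right_inv c := Subtype.ext (funext fun x => by
    show c.1 (x + z + -z) = c.1 x
    rw [add_neg_cancel_right])

theorem memℓp_comp_equiv {ι κ : Type*} (e : κ ≃ ι) {f : ι → ℂ} (hf : Memℓp f 2) :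
    Memℓp (fun k => f (e k)) 2 := by
  have hp : 0 < (2 : ℝ≥0∞).toReal := by norm_num
  exact memℓp_gen ((e.summable_iff
    (f := fun i => ‖f i‖ ^ (2 : ℝ≥0∞).toReal)).mpr (hf.summable hp))

/-- The unitary operator on `ℓ²` induced by a permutation of the index set. -/
def lpCongr {ι κ : Type*} (e : ι ≃ κ) :
    lp (fun _ : ι => ℂ) 2 ≃ₗᵢ[ℂ] lp (fun _ : κ => ℂ) 2 where
  toLinearEquiv :=
    { toFun := fun f => ⟨fun k => f (e.symm k), memℓp_comp_equiv e.symm (lp.memℓp f)⟩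
      map_add' := fun f g => lp.ext (funext fun k => by
        simp [lp.coeFn_add] <;> rfl)
      map_smul' := fun r f => lp.ext (funext fun k => by
        simp [lp.coeFn_smul])
      invFun := fun g => ⟨fun i => g (e i), memℓp_comp_equiv e (lp.memℓp g)⟩
      left_inv := fun f => lp.ext (funext fun i => by simp)
      right_inv := fun g => lp.ext (funext fun k => by simp) }
  norm_map' := fun f => by
    have hp : 0 < (2 : ℝ≥0∞).toReal := by norm_num
    rw [lp.norm_eq_tsum_rpow hp, lp.norm_eq_tsum_rpow hp]
    congr 1
    exact e.symm.tsum_eq (fun i => ‖f i‖ ^ (2 : ℝ≥0∞).toReal)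

/-- The translation operator `τ_z` on the Hilbert space of finite configurations. -/
def tau {n : ℕ} {A : Type*} (q0 : A) (z : Lat n) : H n A q0 ≃ₗᵢ[ℂ] H n A q0 :=
  lpCongr (shiftEquiv q0 z)

/-- A bounded operator on `H` is translation invariant if `τ_z ∘ M ∘ τ_z⁻¹ = M` for all `z`. -/
def TranslationInvariant {n : ℕ} {A : Type*} (q0 : A) (M : H n A q0 →L[ℂ] H n A q0) : Prop :=
  ∀ (z : Lat n) (v : H n A q0), tau q0 z (M ((tau q0 z).symm v)) = M v


section Local

variable {n : ℕ} {A : Type*} [Fintype A]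

/-- The configuration agreeing with `f` on `D` and with `c` outside `D`. -/
def override {q0 : A} (D : Finset (Lat n)) (f : {x // x ∈ D} → A) (c : Conf n A q0) :
    Conf n A q0 :=
  ⟨fun x => if h : x ∈ D then f ⟨x, h⟩ else c.1 x, by
    refine Set.Finite.subset (Set.Finite.union D.finite_toSet c.2) ?_
    intro x hx
    rcases Decidable.em (x ∈ D) with h | h
    · exact Set.mem_union_left _ h
    · exact Set.mem_union_right _ (by simpa [h] using hx)⟩

/-- A bounded operator on the Hilbert space of finite configurations is local upon the finite
set `D` of cells if its action on basis vectors only modifies, and only reads, the cells in `D`. -/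
def IsLocalUpon (q0 : A) (D : Finset (Lat n)) (T : H n A q0 →L[ℂ] H n A q0) : Prop :=
  ∃ a : ({x // x ∈ D} → A) → ({x // x ∈ D} → A) → ℂ, ∀ c : Conf n A q0,
    T (eVec c) = ∑ f : {x // x ∈ D} → A,
      a f (fun x => c.1 x.1) • eVec (override D f c)

/-- The neighborhood of the cell `x`: `𝒩_x = {x + k : k ∈ 𝒩}`. -/
def nbhd {n : ℕ} (𝒩 : Finset (Lat n)) (x : Lat n) : Finset (Lat n) :=
  𝒩.image (fun k => x + k)

/-- The reflected neighborhood of the cell `x`: `𝒱_x = {x - k : k ∈ 𝒩}`. -/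
def rnbhd {n : ℕ} (𝒩 : Finset (Lat n)) (x : Lat n) : Finset (Lat n) :=
  𝒩.image (fun k => x - k)

/-- A unitary `M` is causal relative to the neighborhood `𝒩` if conjugation `M† A M` maps
operators local upon a cell `x` to operators local upon `𝒩_x`. -/
def Causal (q0 : A) (𝒩 : Finset (Lat n)) (M : H n A q0 →L[ℂ] H n A q0) : Prop :=
  ∀ (x : Lat n) (B : H n A q0 →L[ℂ] H n A q0), IsLocalUpon q0 {x} B →
    IsLocalUpon q0 (nbhd 𝒩 x) (ContinuousLinearMap.adjoint M ∘L B ∘L M)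

end Local

/-- The standard basis vector of the one-cell Hilbert space `ℂ^A`. -/
def wVec (A : Type*) [Fintype A] (a : A) : EuclideanSpace ℂ A :=
  letI : DecidableEq A := Classical.decEq A
  EuclideanSpace.single a 1

/-- The configuration obtained from `c` by replacing the value at the cell `x` by `r`. -/
def updateConf {n : ℕ} {A : Type*} {q0 : A} (x : Lat n) (r : A) (c : Conf n A q0) :
    Conf n A q0 :=
  ⟨Function.update c.1 x r, by
    refine Set.Finite.subset (c.2.union (Set.finite_singleton x)) ?_
    intro y hy
    rcases eq_or_ne y x with rfl | hxy
    · exact Set.mem_union_right _ rfl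
    · exact Set.mem_union_left _ (by
        simpa [Function.update_of_ne hxy] using hy)⟩

/-- The subalgebra `𝔇_{y,x}` of `End(ℂ^A)`: endomorphisms `a` of the one-cell Hilbert space
such that the operator `ι_x(a)` local upon `{x}` implementing `a` at the cell `x` is of the form
`R† B R` for some operator `B` local upon `{x - y}`. -/
def Dset {n : ℕ} {A : Type*} [Fintype A] (q0 : A)
    (R : H n A q0 →L[ℂ] H n A q0) (y x : Lat n) :
    Set (Module.End ℂ (EuclideanSpace ℂ A)) :=
  {a | ∃ B : H n A q0 →L[ℂ] H n A q0, IsLocalUpon q0 {x - y} B ∧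
    ∀ c : Conf n A q0,
      (ContinuousLinearMap.adjoint R ∘L B ∘L R) (eVec c) =
        ∑ q : A, (inner ℂ (wVec A q) (a (wVec A (c.1 x))) : ℂ) • eVec (updateConf x q c)}



section Component

variable {n : ℕ} {𝒩 : Finset (Lat n)} {K : {z // z ∈ 𝒩} → Type*}

/-- The propagation map on configurations in component form:
`(s c) x z = (c (x + z)) z`. -/
def sConf (qz : ∀ z : {z // z ∈ 𝒩}, K z) (c : Conf n (∀ z : {z // z ∈ 𝒩}, K z) qz) :
    Conf n (∀ z : {z // z ∈ 𝒩}, K z) qz :=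
  ⟨fun x z => c.1 (x + z.1) z, by
    refine Set.Finite.subset
      (Set.finite_iUnion (fun z : {z // z ∈ 𝒩} =>
        (c.2.preimage ((add_left_injective z.1).injOn)))) ?_
    intro x hx
    obtain ⟨z, hz⟩ := Function.ne_iff.mp hx
    exact Set.mem_iUnion.2 ⟨z, fun h => hz (congrFun h z)⟩⟩

end Component

/-- The support of a finite configuration, as a `Finset`. -/
def suppF {n : ℕ} {A : Type*} {q0 : A} (c : Conf n A q0) : Finset (Lat n) :=
  c.2.toFinset

/-- The property characterizing the local isomorphism `S̃ : H → Ĥ` induced by a one-cell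
unitary `S : W → Ŵ`. -/
def StildeProp {n : ℕ} {A B : Type*} [Fintype A] [Fintype B] (q0 : A) (qh : B)
    (Slin : EuclideanSpace ℂ A ≃ₗᵢ[ℂ] EuclideanSpace ℂ B)
    (St : H n A q0 ≃ₗᵢ[ℂ] H n B qh) : Prop :=
  ∀ c : Conf n A q0,
    St (eVec c) = ∑ g : {x // x ∈ suppF c} → B,
      (∏ x : {x // x ∈ suppF c}, (inner ℂ (wVec B (g x)) (Slin (wVec A (c.1 x.1))) : ℂ)) •
        eVec (override (suppF c) g (c0 n B qh))

/-- An endomorphism of the one-cell Hilbert space `ℂ^P`, `P = Π_{z ∈ 𝒩} K z`, acting only on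
the `y`-th coordinate. -/
def ActsOnCoord {n : ℕ} {𝒩 : Finset (Lat n)} {K : {z // z ∈ 𝒩} → Type*}
    [∀ z, Fintype (K z)] (y : {z // z ∈ 𝒩})
    (Aop : Module.End ℂ (EuclideanSpace ℂ (∀ z : {z // z ∈ 𝒩}, K z))) : Prop :=
  ∃ f : K y → K y → ℂ, ∀ p p' : ∀ z : {z // z ∈ 𝒩}, K z,
    ((∀ z : {z // z ∈ 𝒩}, z ≠ y → p z = p' z) →
      (inner ℂ (wVec _ p) (Aop (wVec _ p')) : ℂ) = f (p y) (p' y)) ∧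
    (¬ (∀ z : {z // z ∈ 𝒩}, z ≠ y → p z = p' z) →
      (inner ℂ (wVec _ p) (Aop (wVec _ p')) : ℂ) = 0)

/-- A factorization of the module `W` as a tensor product `⨂_{k} V k` carrying the sets of
endomorphisms `Dsets k` onto the endomorphisms acting on the `k`-th tensor factor alone. -/
structure PiTensorFactorization (ι : Type) [Fintype ι] [DecidableEq ι]
    (W : Type*) [AddCommGroup W] [Module ℂ W]
    (Dsets : ι → Set (Module.End ℂ W)) : Type _ where
  /-- The tensor factors. -/
  V : ι → Type
  [grp : ∀ k, AddCommGroup (V k)]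
  [mod : ∀ k, Module ℂ (V k)]
  fin : ∀ k, FiniteDimensional ℂ (V k)
  /-- The linear isomorphism with the tensor product. -/
  S : W ≃ₗ[ℂ] PiTensorProduct ℂ V
  cond : ∀ y : ι,
    (fun a : Module.End ℂ W => S.conj a) '' (Dsets y) =
      Set.range (fun f : Module.End ℂ (V y) =>
        (PiTensorProduct.map
          (Function.update (fun k => (LinearMap.id : V k →ₗ[ℂ] V k)) y f) :
            Module.End ℂ (PiTensorProduct ℂ V)))

/-- The continuous linear map underlying a linear isometry equivalence. -/
def isomCLM {E F : Type*} [NormedAddCommGroup E] [NormedAddCommGroup F]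
    [NormedSpace ℂ E] [NormedSpace ℂ F] (e : E ≃ₗᵢ[ℂ] F) : E →L[ℂ] F :=
  e.toLinearIsometry.toContinuousLinearMap

open Function

/-! A translation-invariant `φ` is constant on each translation orbit. A configuration `c ≠ c₀`
has finite nonempty support, so no nonzero translation fixes it and its orbit is a copy of
`ℤ^n`, infinite because `n ≥ 1`; square-summability then forces `φ c = 0`. -/

theorem _root_.Memℓp.eq_zero_of_comp_injective_eq_const {ι κ E : Type*} [NormedAddCommGroup E]
    [Infinite κ] {p : ℝ≥0∞} (hp : 0 < p.toReal) {f : ι → E} (hf : Memℓp f p)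
    {g : κ → ι} (hg : Injective g) {a : E} (h : ∀ k, f (g k) = a) : a = 0 := by
  have hsum : Summable fun _ : κ => ‖a‖ ^ p.toReal := by
    simpa [comp_def, h] using (hf.summable hp).comp_injective hg
  simpa [Real.rpow_eq_zero (norm_nonneg a) hp.ne'] using (summable_const_iff _).mp hsum

theorem _root_.lp.eq_smul_single_of_forall_ne {ι 𝕜 : Type*} [NormedField 𝕜] [DecidableEq ι]
    {p : ℝ≥0∞} (f : lp (fun _ : ι => 𝕜) p) (i : ι) (hf : ∀ j, j ≠ i → f j = 0) :
    f = f i • lp.single p i 1 := by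
  ext j
  rcases eq_or_ne j i with rfl | hj
  · simp
  · simp [hf j hj, hj]

theorem lpCongr_single {ι κ : Type*} [DecidableEq ι] [DecidableEq κ] (e : ι ≃ κ) (i : ι) (a : ℂ) :
    lpCongr e (lp.single 2 i a) = lp.single 2 (e i) a := by
  ext k
  simp [lpCongr, Pi.single_apply, e.symm_apply_eq]

section Shift

variable {n : ℕ} {A : Type*} {q0 : A}

theorem shiftConf_zero (c : Conf n A q0) : shiftConf 0 c = c :=
  Subtype.ext <| funext fun x => congrArg c.1 (add_zero x)

theorem shiftConf_add (z w : Lat n) (c : Conf n A q0) :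
    shiftConf (z + w) c = shiftConf z (shiftConf w c) :=
  Subtype.ext <| funext fun x => congrArg c.1 (add_assoc x z w).symm

theorem shiftConf_c0 (z : Lat n) : shiftConf z (c0 n A q0) = c0 n A q0 := rfl

theorem shiftConf_zsmul_eq_self {z : Lat n} {c : Conf n A q0}
    (h : shiftConf z c = c) (k : ℤ) : shiftConf (k • z) c = c := by
  induction k using Int.induction_on with
  | zero => rw [zero_smul, shiftConf_zero]
  | succ k ih => rw [add_smul, one_smul, add_comm, shiftConf_add, ih, h]
  | pred k ih =>
    rw [sub_smul, one_smul, sub_eq_add_neg, add_comm, shiftConf_add, ih]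
    conv_lhs => rw [← h]
    rw [← shiftConf_add, neg_add_cancel, shiftConf_zero]

theorem eq_c0_of_shiftConf_eq_self {z : Lat n} (hz : z ≠ 0) {c : Conf n A q0}
    (h : shiftConf z c = c) : c = c0 n A q0 := by
  by_contra hc
  obtain ⟨x, hx⟩ : ∃ x, c.1 x ≠ q0 := by
    by_contra! hx
    exact hc (Subtype.ext (funext hx))
  refine Set.infinite_of_injective_forall_mem (f := fun k : ℤ => x + k • z) ?_ (fun k => ?_) c.2
  · exact fun k l hkl => smul_left_injective ℤ hz (add_left_cancel hkl)
  · have hk : c.1 (x + k • z) = c.1 x :=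
      congrArg (fun c' : Conf n A q0 => c'.1 x) (shiftConf_zsmul_eq_self h k)
    show c.1 (x + k • z) ≠ q0
    rwa [hk]

theorem injective_shiftConf_of_ne_c0 {c : Conf n A q0} (hc : c ≠ c0 n A q0) :
    Injective fun z : Lat n => shiftConf z c := by
  intro z w hzw
  rw [← sub_eq_zero]
  by_contra hne
  refine hc (eq_c0_of_shiftConf_eq_self hne ?_)
  simp only at hzw
  rw [sub_eq_add_neg, add_comm, shiftConf_add, hzw, ← shiftConf_add, neg_add_cancel, shiftConf_zero]

theorem eVec_eq_single [DecidableEq (Conf n A q0)] (c : Conf n A q0) :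
    eVec c = lp.single 2 c 1 := by
  unfold eVec
  congr
  exact Subsingleton.elim _ _

theorem tau_apply (z : Lat n) (ψ : H n A q0) (c : Conf n A q0) :
    tau q0 z ψ c = ψ (shiftConf (-z) c) := rfl

theorem tau_eVec (z : Lat n) (c : Conf n A q0) : tau q0 z (eVec c) = eVec (shiftConf z c) := by
  classical
  rw [eVec_eq_single, eVec_eq_single]
  exact lpCongr_single (shiftEquiv q0 z) c 1

end Shift

theorem translation_invariant_vectors_one_dimensional_general
    (n : ℕ) (hn : 1 ≤ n) (Q : Type) (q₀ : Q) (φ : H n Q q₀) :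
    (∀ z : Lat n, tau q₀ z φ = φ) ↔ ∃ a : ℂ, φ = a • eVec (c0 n Q q₀) := by
  classical
  constructor
  · intro hφ
    have : Nonempty (Fin n) := ⟨⟨0, hn⟩⟩
    have hzero (c : Conf n Q q₀) (hc : c ≠ c0 n Q q₀) : φ c = 0 :=
      (lp.memℓp φ).eq_zero_of_comp_injective_eq_const (by norm_num)
        (injective_shiftConf_of_ne_c0 hc) fun z => by
          simpa [tau_apply] using congrArg (· c) (hφ (-z))
    exact ⟨φ (c0 n Q q₀), eVec_eq_single (c0 n Q q₀) ▸ lp.eq_smul_single_of_forall_ne φ _ hzero⟩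
  · rintro ⟨a, rfl⟩ z
    rw [map_smul, tau_eVec, shiftConf_c0]

/-- The space of vectors in `H` fixed by every translation is one-dimensional:
for `φ ∈ H`, one has `τ_z φ = φ` for all `z ∈ ℤ^n` if and only if `φ` is a scalar multiple of
the quiescent basis vector `e_{c₀}`. -/
theorem translation_invariant_vectors_one_dimensional
    (n : ℕ) (hn : 1 ≤ n) (Q : Type) [Fintype Q] (q₀ : Q) (φ : H n Q q₀) :
    (∀ z : Lat n, tau q₀ z φ = φ) ↔ ∃ a : ℂ, φ = a • eVec (c0 n Q q₀) :=
  translation_invariant_vectors_one_dimensional_general n hn Q q₀ φ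

end QCA
end
end

section
/- (Structural Reversibility.) Let M be a unitary operator on H and 𝒩 ⊆ ℤ^n a finite neighborhood. Then the following are equivalent: (a) for every x ∈ ℤ^n and every bounded operator A local upon {x}, M† A M is local upon 𝒩_x; (b) for every x ∈ ℤ^n and every bounded operator A local upon {x}, M A M† is local upon 𝒱_x. -/
open scoped ENNReal

noncomputable section

namespace QCA

/-!
Operators local upon disjoint sets commute. Conversely, an operator `N` that commutes with every
operator local upon a single cell outside `D` is local upon `D`: commuting with the projections
onto `c y = s` kills the matrix elements that change a cell `y ∉ D`, and commuting with the
permutations of the state at `y` shows that the remaining matrix elements do not depend on the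
cells outside `D`.

Now let `A` be local upon `{x}` and `T` local upon `{y}` with `y ∉ 𝒱_x`, i.e. `x ∉ 𝒩_y`.
If `M† T M` is local upon `𝒩_y`, it commutes with `A`, so conjugating by the unitary `M`,
`M A M†` commutes with `T`; hence `M A M†` is local upon `𝒱_x`. The converse is the same
implication for `M†` and the neighborhood `-𝒩`.
-/

section Basis

open scoped Classical

variable {n : ℕ} {Q : Type*} {q₀ : Q}

lemma Conf.ext {c d : Conf n Q q₀} (h : ∀ x, c.1 x = d.1 x) : c = d :=
  Subtype.ext (funext h)

lemma updateConf_val (y : Lat n) (r : Q) (c : Conf n Q q₀) :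
    (updateConf y r c).1 = Function.update c.1 y r := rfl

lemma override_val_of_mem {D : Finset (Lat n)} (f : {x // x ∈ D} → Q) (c : Conf n Q q₀)
    {z : Lat n} (hz : z ∈ D) : (override D f c).1 z = f ⟨z, hz⟩ := dif_pos hz

lemma override_val_of_notMem {D : Finset (Lat n)} (f : {x // x ∈ D} → Q) (c : Conf n Q q₀)
    {z : Lat n} (hz : z ∉ D) : (override D f c).1 z = c.1 z := dif_neg hz

lemma override_restrict_eq {D : Finset (Lat n)} {c d : Conf n Q q₀}
    (h : ∀ z ∉ D, d.1 z = c.1 z) : override D (fun x => d.1 x.1) c = d :=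
  Conf.ext fun z => by
    by_cases hz : z ∈ D
    · rw [override_val_of_mem _ _ hz]
    · rw [override_val_of_notMem _ _ hz, h z hz]

lemma override_singleton (y : Lat n) (f : {x // x ∈ ({y} : Finset (Lat n))} → Q)
    (c : Conf n Q q₀) :
    override {y} f c = updateConf y (f ⟨y, Finset.mem_singleton_self y⟩) c :=
  Conf.ext fun z => by
    rcases eq_or_ne z y with rfl | hz
    · simp [override_val_of_mem, updateConf_val]
    · rw [override_val_of_notMem _ _ (by simpa using hz), updateConf_val,
        Function.update_of_ne hz]

lemma override_comm {D₁ D₂ : Finset (Lat n)} (hD : Disjoint D₁ D₂)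
    (f : {x // x ∈ D₁} → Q) (g : {x // x ∈ D₂} → Q) (c : Conf n Q q₀) :
    override D₁ f (override D₂ g c) = override D₂ g (override D₁ f c) :=
  Conf.ext fun z => by
    by_cases h₁ : z ∈ D₁
    · have h₂ : z ∉ D₂ := Finset.disjoint_left.mp hD h₁
      rw [override_val_of_mem _ _ h₁, override_val_of_notMem _ _ h₂,
        override_val_of_mem _ _ h₁]
    · by_cases h₂ : z ∈ D₂
      · rw [override_val_of_notMem _ _ h₁, override_val_of_mem _ _ h₂,
          override_val_of_mem _ _ h₂]
      · simp only [override_val_of_notMem _ _ h₁, override_val_of_notMem _ _ h₂]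

lemma updateConf_self (y : Lat n) (c : Conf n Q q₀) : updateConf y (c.1 y) c = c :=
  Subtype.ext (Function.update_eq_self y c.1)

lemma eVec_apply (c d : Conf n Q q₀) : eVec c d = if d = c then 1 else 0 := by
  rw [eVec, lp.single_apply, Pi.single_apply]

lemma lpCongr_eVec (e : Conf n Q q₀ ≃ Conf n Q q₀) (c : Conf n Q q₀) :
    lpCongr e (eVec c) = eVec (e c) :=
  lp.ext <| funext fun d => by
    change eVec c (e.symm d) = eVec (e c) d
    simp only [eVec_apply, Equiv.symm_apply_eq]

lemma ext_eVec {T S : H n Q q₀ →L[ℂ] H n Q q₀} (h : ∀ c, T (eVec c) = S (eVec c)) :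
    T = S := by
  refine lp.ext_continuousLinearMap ENNReal.ofNat_ne_top fun c => ?_
  refine ContinuousLinearMap.ext_ring ?_
  exact h c

def indicatorCLM {ι : Type*} (S : Set ι) :
    lp (fun _ : ι => ℂ) 2 →L[ℂ] lp (fun _ : ι => ℂ) 2 :=
  LinearMap.mkContinuous
    { toFun := fun v =>
        ⟨S.indicator v, (lp.memℓp v).mono' fun i => norm_indicator_le_norm_self _ _⟩
      map_add' := fun v w => lp.ext (Set.indicator_add' S v w)
      map_smul' := fun a v => lp.ext (Set.indicator_const_smul S a v) } 1
    fun v => by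
      rw [one_mul]
      exact lp.norm_mono two_ne_zero fun i => norm_indicator_le_norm_self _ _

lemma indicatorCLM_apply {ι : Type*} (S : Set ι) (v : lp (fun _ : ι => ℂ) 2) (i : ι) :
    indicatorCLM S v i = S.indicator v i := rfl

def sitePerm (y : Lat n) (π : Equiv.Perm Q) : Equiv.Perm (Conf n Q q₀) where
  toFun c := updateConf y (π (c.1 y)) c
  invFun c := updateConf y (π.symm (c.1 y)) c
  left_inv c := Conf.ext fun z => by
    rcases eq_or_ne z y with rfl | hz <;> simp [updateConf_val, *]
  right_inv c := Conf.ext fun z => by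
    rcases eq_or_ne z y with rfl | hz <;> simp [updateConf_val, *]

lemma sitePerm_apply (y : Lat n) (π : Equiv.Perm Q) (c : Conf n Q q₀) :
    sitePerm y π c = updateConf y (π (c.1 y)) c := rfl

def siteProj (y : Lat n) (s : Q) : H n Q q₀ →L[ℂ] H n Q q₀ :=
  indicatorCLM {c | c.1 y = s}

def sitePermCLM (y : Lat n) (π : Equiv.Perm Q) : H n Q q₀ →L[ℂ] H n Q q₀ :=
  isomCLM (lpCongr (sitePerm y π))

lemma siteProj_eVec (y : Lat n) (s : Q) (c : Conf n Q q₀) :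
    siteProj y s (eVec c) = (if c.1 y = s then 1 else 0 : ℂ) • eVec c :=
  lp.ext <| funext fun d => by
    rw [siteProj, indicatorCLM_apply, lp.coeFn_smul, Pi.smul_apply, smul_eq_mul]
    by_cases hd : d = c
    · subst hd
      by_cases h : d.1 y = s <;> simp [h, eVec_apply]
    · simp [hd, eVec_apply]

lemma apply_eVec_eq_zero_of_commute_siteProj {N : H n Q q₀ →L[ℂ] H n Q q₀} {y : Lat n}
    (hN : ∀ s, Commute N (siteProj y s)) {c d : Conf n Q q₀} (hne : d.1 y ≠ c.1 y) :
    N (eVec c) d = 0 := by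
  have h := congrArg (fun T : H n Q q₀ →L[ℂ] H n Q q₀ => T (eVec c) d) (hN (c.1 y)).eq
  simp only [mul_apply_eq_comp, siteProj_eVec, if_pos, one_smul] at h
  rw [h, siteProj, indicatorCLM_apply]
  exact Set.indicator_of_notMem (s := {c' : Conf n Q q₀ | c'.1 y = c.1 y}) hne _

lemma apply_eVec_sitePerm_of_commute {N : H n Q q₀ →L[ℂ] H n Q q₀} {y : Lat n}
    {π : Equiv.Perm Q} (hN : Commute N (sitePermCLM y π)) (c d : Conf n Q q₀) :
    N (eVec (sitePerm y π c)) (sitePerm y π d) = N (eVec c) d := by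
  have h := congrArg (fun T : H n Q q₀ →L[ℂ] H n Q q₀ => T (eVec c) (sitePerm y π d))
    hN.eq
  simp only [mul_apply_eq_comp] at h
  rw [sitePermCLM, isomCLM, LinearIsometry.coe_toContinuousLinearMap,
    LinearIsometryEquiv.coe_toLinearIsometry, lpCongr_eVec] at h
  rw [h]
  exact congrArg (N (eVec c)) ((sitePerm y π).symm_apply_apply d)

end Basis

section Locality

open scoped Classical

variable {n : ℕ} {Q : Type*} [Fintype Q] {q₀ : Q}

lemma isLocalUpon_singleton_of_eVec {y : Lat n} {T : H n Q q₀ →L[ℂ] H n Q q₀}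
    (φ : Q → ℂ) (ψ : Q → Q)
    (hT : ∀ c, T (eVec c) = φ (c.1 y) • eVec (updateConf y (ψ (c.1 y)) c)) :
    IsLocalUpon q₀ {y} T := by
  let y' : {x // x ∈ ({y} : Finset (Lat n))} := ⟨y, Finset.mem_singleton_self y⟩
  refine ⟨fun f g => if f y' = ψ (g y') then φ (g y') else 0, fun c => ?_⟩
  rw [hT, Fintype.sum_eq_single (fun _ => ψ (c.1 y))]
  · simp only [y', if_pos, override_singleton]
  · intro f hf
    dsimp only
    rw [if_neg fun h => hf (funext fun z => by rwa [Subsingleton.elim z y']), zero_smul]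

lemma isLocalUpon_siteProj (y : Lat n) (s : Q) : IsLocalUpon q₀ {y} (siteProj y s) :=
  isLocalUpon_singleton_of_eVec (fun r => if r = s then 1 else 0) id fun c => by
    rw [siteProj_eVec, id, updateConf_self]

lemma isLocalUpon_sitePermCLM (y : Lat n) (π : Equiv.Perm Q) :
    IsLocalUpon q₀ {y} (sitePermCLM y π) :=
  isLocalUpon_singleton_of_eVec 1 π fun c => by
    rw [Pi.one_apply, one_smul]
    exact lpCongr_eVec _ c

lemma IsLocalUpon.commute {D₁ D₂ : Finset (Lat n)} (hD : Disjoint D₁ D₂)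
    {A B : H n Q q₀ →L[ℂ] H n Q q₀} (hA : IsLocalUpon q₀ D₁ A) (hB : IsLocalUpon q₀ D₂ B) :
    Commute A B := by
  obtain ⟨a, ha⟩ := hA
  obtain ⟨b, hb⟩ := hB
  have restrict_override {D D' : Finset (Lat n)} (h : Disjoint D D') (g : {x // x ∈ D'} → Q)
      (c : Conf n Q q₀) :
      (fun x : {x // x ∈ D} => (override D' g c).1 x.1) = fun x => c.1 x.1 :=
    funext fun x => override_val_of_notMem _ _ (Finset.disjoint_left.mp h x.2)
  refine ext_eVec fun c => ?_
  simp only [mul_apply_eq_comp, ha, hb, map_sum, map_smul, Finset.smul_sum, smul_smul,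
    restrict_override hD, restrict_override hD.symm]
  rw [Finset.sum_comm]
  refine Finset.sum_congr rfl fun f _ => Finset.sum_congr rfl fun g _ => ?_
  rw [mul_comm, override_comm hD]

variable {D : Finset (Lat n)} {N : H n Q q₀ →L[ℂ] H n Q q₀}

lemma apply_eVec_override_eq (hN : ∀ y ∉ D, ∀ T, IsLocalUpon q₀ {y} T → Commute N T)
    (e : Conf n Q q₀) (S : Finset (Lat n)) {c d : Conf n Q q₀} (hd : ∀ y ∉ D, d.1 y = c.1 y)
    (hS : ∀ y ∉ S, y ∉ D → c.1 y = e.1 y) :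
    N (eVec (override D (fun x => c.1 x.1) e)) (override D (fun x => d.1 x.1) e) =
      N (eVec c) d := by
  induction S using Finset.induction_on generalizing c d with
  | empty =>
    rw [override_restrict_eq fun y hy => hS y (Finset.notMem_empty y) hy,
      override_restrict_eq fun y hy => (hd y hy).trans (hS y (Finset.notMem_empty y) hy)]
  | insert y S hyS ih =>
    by_cases hy : y ∈ D
    · refine ih hd fun z hz hzD => hS z ?_ hzD
      rw [Finset.mem_insert]
      rintro (rfl | hz')
      exacts [hzD hy, hz hz']
    set σ := sitePerm (q₀ := q₀) y (Equiv.swap (c.1 y) (e.1 y))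
    have hσ {c' : Conf n Q q₀} (hc' : c'.1 y = c.1 y) (z : Lat n) :
        (σ c').1 z = if z = y then e.1 y else c'.1 z := by
      rw [sitePerm_apply, updateConf_val, Function.update_apply, hc', Equiv.swap_apply_left]
    have hrestrict {c' : Conf n Q q₀} (hc' : c'.1 y = c.1 y) :
        (fun x : {x // x ∈ D} => (σ c').1 x.1) = fun x => c'.1 x.1 :=
      funext fun x => by rw [hσ hc', if_neg (ne_of_mem_of_not_mem x.2 hy)]
    have key := ih (c := σ c) (d := σ d)
      (fun z hz => by rw [hσ rfl, hσ (hd y hy), hd z hz])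
      (fun z hz hzD => by
        rw [hσ rfl]
        split_ifs with hzy
        · rw [hzy]
        · exact hS z (by simp [hzy, hz]) hzD)
    rw [hrestrict rfl, hrestrict (hd y hy),
      apply_eVec_sitePerm_of_commute (hN y hy _ (isLocalUpon_sitePermCLM _ _))] at key
    exact key

theorem isLocalUpon_of_forall_commute
    (hN : ∀ y ∉ D, ∀ T, IsLocalUpon q₀ {y} T → Commute N T) : IsLocalUpon q₀ D N := by
  refine ⟨fun f g => N (eVec (override D g (c0 n Q q₀))) (override D f (c0 n Q q₀)),
    fun c => lp.ext (funext fun d => ?_)⟩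
  simp only [lp.coeFn_sum, Finset.sum_apply, lp.coeFn_smul, Pi.smul_apply, smul_eq_mul,
    eVec_apply]
  by_cases hd : ∀ y ∉ D, d.1 y = c.1 y
  · rw [Fintype.sum_eq_single (fun x => d.1 x.1), if_pos (override_restrict_eq hd).symm,
      mul_one, apply_eVec_override_eq hN _ (suppF c) hd fun y hy _ => ?_]
    · by_contra hne
      exact hy ((Set.Finite.mem_toFinset _).mpr hne)
    · intro f hf
      rw [if_neg, mul_zero]
      rintro rfl
      exact hf (funext fun x => (override_val_of_mem f c x.2).symm)
  · push Not at hd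
    obtain ⟨y, hy, hne⟩ := hd
    rw [apply_eVec_eq_zero_of_commute_siteProj
      (fun s => hN y hy _ (isLocalUpon_siteProj y s)) hne]
    refine (Finset.sum_eq_zero fun f _ => ?_).symm
    rw [if_neg, mul_zero]
    rintro rfl
    exact hne (override_val_of_notMem f c hy)

end Locality

section Reversibility

variable {n : ℕ} {Q : Type*} [Fintype Q] {q₀ : Q}

open Pointwise in
lemma nbhd_neg (𝒩 : Finset (Lat n)) (x : Lat n) : nbhd (-𝒩) x = rnbhd 𝒩 x := by
  simp [nbhd, rnbhd, ← Finset.image_neg_eq_neg, Finset.image_image, Function.comp_def,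
    sub_eq_add_neg]

open Pointwise in
lemma rnbhd_neg (𝒩 : Finset (Lat n)) (x : Lat n) : rnbhd (-𝒩) x = nbhd 𝒩 x := by
  simp [nbhd, rnbhd, ← Finset.image_neg_eq_neg, Finset.image_image, Function.comp_def]

open Pointwise in
lemma causal_neg_adjoint {𝒩 : Finset (Lat n)} {M : H n Q q₀ →L[ℂ] H n Q q₀}
    (h : ∀ (x : Lat n) (A : H n Q q₀ →L[ℂ] H n Q q₀), IsLocalUpon q₀ {x} A →
      IsLocalUpon q₀ (rnbhd 𝒩 x) (M ∘L A ∘L ContinuousLinearMap.adjoint M)) :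
    Causal q₀ (-𝒩) (ContinuousLinearMap.adjoint M) := fun x A hA => by
  rw [nbhd_neg, ContinuousLinearMap.adjoint_adjoint]
  exact h x A hA

lemma mem_nbhd_iff_mem_rnbhd {𝒩 : Finset (Lat n)} {x y : Lat n} :
    x ∈ nbhd 𝒩 y ↔ y ∈ rnbhd 𝒩 x := by
  simp only [nbhd, rnbhd, Finset.mem_image, eq_sub_iff_add_eq, eq_comm]

theorem Causal.isLocalUpon_conj_adjoint {𝒩 : Finset (Lat n)} {M : H n Q q₀ →L[ℂ] H n Q q₀}
    (hM : M ∈ unitary (H n Q q₀ →L[ℂ] H n Q q₀)) (h : Causal q₀ 𝒩 M) {x : Lat n}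
    {A : H n Q q₀ →L[ℂ] H n Q q₀} (hA : IsLocalUpon q₀ {x} A) :
    IsLocalUpon q₀ (rnbhd 𝒩 x) (M ∘L A ∘L ContinuousLinearMap.adjoint M) := by
  refine isLocalUpon_of_forall_commute fun y hy T hT => ?_
  have hdisj : Disjoint {x} (nbhd 𝒩 y) :=
    Finset.disjoint_singleton_left.mpr (mt mem_nbhd_iff_mem_rnbhd.mp hy)
  let conjM := Unitary.conjStarAlgAut ℂ (H n Q q₀ →L[ℂ] H n Q q₀) ⟨M, hM⟩
  have hcomm : Commute A (conjM.symm T) := by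
    rw [Unitary.conjStarAlgAut_symm_apply, mul_assoc]
    exact hA.commute hdisj (h y T hT)
  have := hcomm.map conjM
  rwa [StarAlgEquiv.apply_symm_apply, Unitary.conjStarAlgAut_apply, mul_assoc] at this

end Reversibility

theorem structural_reversibility_general
    (n : ℕ) (Q : Type) [Fintype Q] (q₀ : Q) (𝒩 : Finset (Lat n))
    (M : H n Q q₀ →L[ℂ] H n Q q₀) (hM : M ∈ unitary (H n Q q₀ →L[ℂ] H n Q q₀)) :
    (∀ (x : Lat n) (A : H n Q q₀ →L[ℂ] H n Q q₀), IsLocalUpon q₀ {x} A →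
        IsLocalUpon q₀ (nbhd 𝒩 x) (ContinuousLinearMap.adjoint M ∘L A ∘L M)) ↔
      (∀ (x : Lat n) (A : H n Q q₀ →L[ℂ] H n Q q₀), IsLocalUpon q₀ {x} A →
        IsLocalUpon q₀ (rnbhd 𝒩 x) (M ∘L A ∘L ContinuousLinearMap.adjoint M)) := by
  refine ⟨fun h x A hA => Causal.isLocalUpon_conj_adjoint hM h hA, fun h x A hA => ?_⟩
  simpa only [rnbhd_neg, ContinuousLinearMap.star_eq_adjoint,
    ContinuousLinearMap.adjoint_adjoint] using
    (causal_neg_adjoint h).isLocalUpon_conj_adjoint (Unitary.star_mem hM) hA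

/-- Structural Reversibility. For a unitary `M` and a neighborhood `𝒩`:
conjugation by `M` maps one-cell operators to operators local upon `𝒩_x` if and only if
conjugation by `M†` maps one-cell operators to operators local upon `𝒱_x`. -/
theorem structural_reversibility
    (n : ℕ) (hn : 1 ≤ n) (Q : Type) [Fintype Q] (q₀ : Q) (𝒩 : Finset (Lat n))
    (M : H n Q q₀ →L[ℂ] H n Q q₀) (hM : M ∈ unitary (H n Q q₀ →L[ℂ] H n Q q₀)) :
    (∀ (x : Lat n) (A : H n Q q₀ →L[ℂ] H n Q q₀), IsLocalUpon q₀ {x} A →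
        IsLocalUpon q₀ (nbhd 𝒩 x) (ContinuousLinearMap.adjoint M ∘L A ∘L M)) ↔
      (∀ (x : Lat n) (A : H n Q q₀ →L[ℂ] H n Q q₀), IsLocalUpon q₀ {x} A →
        IsLocalUpon q₀ (rnbhd 𝒩 x) (M ∘L A ∘L ContinuousLinearMap.adjoint M)) :=
  structural_reversibility_general n Q q₀ 𝒩 M hM

end QCA
end
end

section
/- Let V be a nonzero finite-dimensional complex inner product space and A a subalgebra of End(V) (containing the identity) that is self-adjoint. Then A is a semisimple ring. -/
/-!
A self-adjoint algebra `A` of operators on a finite-dimensional inner product space `V` acts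
semisimply on `V`: the orthogonal complement of an `A`-stable subspace is `A`-stable, because
`⟪w, a v⟫ = ⟪a† w, v⟫` and `a† ∈ A`. Since `V` is faithful and finite over the central scalars,
`a ↦ (a bᵢ)ᵢ` for a spanning family `(bᵢ)` embeds `A` into the semisimple module `Vⁿ`, so `A` is
semisimple as a module over itself.
-/

theorem FaithfulSMul.exists_injective_linearMap_fin_pi (K R M : Type*) [Semiring K] [Ring R]
    [AddCommGroup M] [Module R M] [Module K M] [SMulCommClass R K M] [Module.Finite K M]
    [FaithfulSMul R M] : ∃ (n : ℕ) (f : R →ₗ[R] Fin n → M), Function.Injective f := by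
  obtain ⟨n, b, hb⟩ := Module.Finite.exists_fin (R := K) (M := M)
  refine ⟨n, LinearMap.pi fun i ↦ LinearMap.toSpanSingleton R M (b i), ?_⟩
  rw [← LinearMap.ker_eq_bot, LinearMap.ker_eq_bot']
  intro r hr
  have h_on_span : DistribSMul.toLinearMap K M r = 0 :=
    LinearMap.ext_on_range hb fun i ↦ congrFun hr i
  exact eq_of_smul_eq_smul fun m ↦ (LinearMap.congr_fun h_on_span m).trans (zero_smul R m).symm

theorem IsSemisimpleRing.of_faithfulSMul (K R M : Type*) [Semiring K] [Ring R]
    [AddCommGroup M] [Module R M] [Module K M] [SMulCommClass R K M] [Module.Finite K M]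
    [FaithfulSMul R M] [IsSemisimpleModule R M] : IsSemisimpleRing R := by
  obtain ⟨n, f, hf⟩ := FaithfulSMul.exists_injective_linearMap_fin_pi K R M
  exact IsSemisimpleModule.of_injective f hf

theorem Subalgebra.isSemisimpleModule_of_adjoint_mem {𝕜 V : Type*} [RCLike 𝕜]
    [NormedAddCommGroup V] [InnerProductSpace 𝕜 V] [FiniteDimensional 𝕜 V]
    (A : Subalgebra 𝕜 (Module.End 𝕜 V)) (hA : ∀ a ∈ A, a.adjoint ∈ A) :
    IsSemisimpleModule A V where
  exists_isCompl W := by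
    let Wperp : Submodule A V :=
      { (W.restrictScalars 𝕜)ᗮ with
        smul_mem' := fun a v hv ↦ by
          rw [Submodule.mem_carrier, SetLike.mem_coe, Submodule.mem_orthogonal] at hv ⊢
          intro w hw
          change inner 𝕜 w ((a : Module.End 𝕜 V) v) = 0
          rw [← LinearMap.adjoint_inner_left]
          exact hv _ (W.smul_mem ⟨_, hA _ a.2⟩ hw) }
    exact ⟨Wperp,
      (Submodule.isCompl_restrictScalars_iff 𝕜).1 (W.restrictScalars 𝕜).isCompl_orthogonal⟩

theorem selfadjoint_subalgebra_isSemisimpleRing_general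
    (V : Type) [NormedAddCommGroup V] [InnerProductSpace ℂ V]
    [FiniteDimensional ℂ V]
    (A : Subalgebra ℂ (Module.End ℂ V))
    (hSA : ∀ a ∈ A, LinearMap.adjoint a ∈ A) :
    IsSemisimpleRing A := by
  have := A.isSemisimpleModule_of_adjoint_mem hSA
  exact IsSemisimpleRing.of_faithfulSMul ℂ A V

/-- STATEMENT 16. A self-adjoint subalgebra (containing the identity) of the endomorphism
algebra of a nonzero finite-dimensional complex inner product space is a semisimple ring. -/
theorem selfadjoint_subalgebra_isSemisimpleRing
    (V : Type) [NormedAddCommGroup V] [InnerProductSpace ℂ V]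
    [FiniteDimensional ℂ V] [Nontrivial V]
    (A : Subalgebra ℂ (Module.End ℂ V))
    (hSA : ∀ a ∈ A, LinearMap.adjoint a ∈ A) :
    IsSemisimpleRing A :=
  selfadjoint_subalgebra_isSemisimpleRing_general V A hSA
end
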